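/- For any program Π with nested expressions and any sets of atoms X and Y with Y ⊆ X: Y classically satisfies the reduct Π^X (in the sense of replacing maximal unsatisfied subformulas with ⊥) if and only if X classically satisfies Π and Y classically satisfies the 1999-style reduct Π^{X̲} (in which each maximal subformula ¬F is replaced by ⊤ if X ⊨ ¬F and by ⊥ otherwise). -/
import Mathlib


inductive PForm (α : Type) : Type where
  | bot : PForm α
  | atom : α → PForm α
  | and : PForm α → PForm α → PForm α
  | or : PForm α → PForm α → PForm α
  | imp : PForm α → PForm α → PForm α

namespace PForm

variable {α : Type}

def top : PForm α := imp bot bot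

def neg (F : PForm α) : PForm α := imp F bot

def sat (X : Set α) : PForm α → Prop
  | bot => False
  | atom a => a ∈ X
  | and F G => sat X F ∧ sat X G
  | or F G => sat X F ∨ sat X G
  | imp F G => sat X F → sat X G

open Classical in
noncomputable def reduct (X : Set α) : PForm α → PForm α
  | bot => bot
  | atom a => if a ∈ X then atom a else bot
  | and F G => if sat X (and F G) then and (reduct X F) (reduct X G) else bot
  | or F G => if sat X (or F G) then or (reduct X F) (reduct X G) else bot
  | imp F G => if sat X (imp F G) then imp (reduct X F) (reduct X G) else bot

def headAtoms : PForm α → Set α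
  | bot => ∅
  | atom a => {a}
  | and F G => headAtoms F ∪ headAtoms G
  | or F G => headAtoms F ∪ headAtoms G
  | imp _ G => headAtoms G

def atomsOf : PForm α → Set α
  | bot => ∅
  | atom a => {a}
  | and F G => atomsOf F ∪ atomsOf G
  | or F G => atomsOf F ∪ atomsOf G
  | imp F G => atomsOf F ∪ atomsOf G

def htSat (X Y : Set α) : PForm α → Prop
  | bot => False
  | atom a => a ∈ X
  | and F G => htSat X Y F ∧ htSat X Y G
  | or F G => htSat X Y F ∨ htSat X Y G
  | imp F G => (htSat X Y F → htSat X Y G) ∧ sat Y (imp F G)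

end PForm

variable {α : Type}

/-- Satisfaction of a theory (set of formulas). -/
def satTh (X : Set α) (Γ : Set (PForm α)) : Prop := ∀ F ∈ Γ, PForm.sat X F

/-- The reduct of a theory relative to X. -/
noncomputable def reductTh (X : Set α) (Γ : Set (PForm α)) : Set (PForm α) :=
  PForm.reduct X '' Γ

/-- X is a stable model of Γ iff X is a minimal set satisfying Γ^X. -/
def StableModel (Γ : Set (PForm α)) (X : Set α) : Prop :=
  satTh X (reductTh X Γ) ∧ ∀ Y : Set α, Y ⊂ X → ¬ satTh Y (reductTh X Γ)

def htSatTh (X Y : Set α) (Γ : Set (PForm α)) : Prop := ∀ F ∈ Γ, PForm.htSat X Y F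

def theoryHeadAtoms (Γ : Set (PForm α)) : Set α := ⋃ F ∈ Γ, PForm.headAtoms F

open Classical in
/-- Nested expressions: built from atoms, ⊥ (and ⊤ = ¬⊥) with ∧, ∨, ¬. -/
inductive Nested : PForm α → Prop where
  | bot : Nested PForm.bot
  | atom (a : α) : Nested (PForm.atom a)
  | and {F G : PForm α} : Nested F → Nested G → Nested (PForm.and F G)
  | or {F G : PForm α} : Nested F → Nested G → Nested (PForm.or F G)
  | neg {F : PForm α} : Nested F → Nested (PForm.imp F PForm.bot)

open Classical in
/-- The 1999 reduct of a nested expression: each maximal subformula ¬F is replaced by ⊤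
if X ⊭ F and by ⊥ if X ⊨ F. -/
noncomputable def oldReduct (X : Set α) : PForm α → PForm α
  | PForm.bot => PForm.bot
  | PForm.atom a => PForm.atom a
  | PForm.and F G => PForm.and (oldReduct X F) (oldReduct X G)
  | PForm.or F G => PForm.or (oldReduct X F) (oldReduct X G)
  | PForm.imp F PForm.bot => if PForm.sat X F then PForm.bot else PForm.top
  | PForm.imp F G => PForm.imp (oldReduct X F) (oldReduct X G)

/-- The 1999 reduct of a rule G → F : the reduct is applied to body and head separately. -/
noncomputable def oldReductRule (X : Set α) : PForm α → PForm α
  | PForm.imp G F => PForm.imp (oldReduct X G) (oldReduct X F)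
  | F => oldReduct X F

open PForm in
lemma mono_old {F : PForm α} (h : Nested F) {X Y : Set α} (hYX : Y ⊆ X) :
    sat Y (oldReduct X F) → sat X F := by
  induction h with
  | bot => simp [oldReduct, sat]
  | atom a => simpa [oldReduct, sat] using @hYX a
  | @and A B h1 h2 ih1 ih2 =>
      simp only [oldReduct, sat]; exact fun ⟨a, b⟩ => ⟨ih1 a, ih2 b⟩
  | @or A B h1 h2 ih1 ih2 =>
      simp only [oldReduct, sat]; rintro (a | b); exacts [Or.inl (ih1 a), Or.inr (ih2 b)]
  | @neg A h ih =>
      intro hy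
      simp only [oldReduct] at hy
      by_cases hx : sat X A
      · rw [if_pos hx] at hy; exact hy.elim
      · exact fun hf => (hx hf).elim

open PForm in
lemma key {F : PForm α} (h : Nested F) {X Y : Set α} (hYX : Y ⊆ X) :
    sat Y (reduct X F) ↔ (sat X F ∧ sat Y (oldReduct X F)) := by
  induction h with
  | bot => simp [reduct, oldReduct, sat]
  | atom a =>
      by_cases hx : a ∈ X <;> simp [reduct, oldReduct, sat, hx]
  | @and A B h1 h2 ih1 ih2 =>
      by_cases hs : sat X (PForm.and A B)
      · have e : reduct X (PForm.and A B) = PForm.and (reduct X A) (reduct X B) := by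
          simp only [reduct, if_pos hs]
        rw [e]
        constructor
        · rintro ⟨a, b⟩
          exact ⟨hs, ((ih1.mp a).2), ((ih2.mp b).2)⟩
        · rintro ⟨hs', a, b⟩
          exact ⟨ih1.mpr ⟨hs.1, a⟩, ih2.mpr ⟨hs.2, b⟩⟩
      · have e : reduct X (PForm.and A B) = PForm.bot := by
          simp only [reduct, if_neg hs]
        rw [e]
        simp only [sat]
        exact ⟨False.elim, fun h => hs h.1⟩
  | @or A B h1 h2 ih1 ih2 =>
      by_cases hs : sat X (PForm.or A B)
      · have e : reduct X (PForm.or A B) = PForm.or (reduct X A) (reduct X B) := by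
          simp only [reduct, if_pos hs]
        rw [e]
        constructor
        · rintro (a | b)
          exacts [⟨hs, Or.inl (ih1.mp a).2⟩, ⟨hs, Or.inr (ih2.mp b).2⟩]
        · rintro ⟨hs', a | b⟩
          exacts [Or.inl (ih1.mpr ⟨mono_old h1 hYX a, a⟩),
                  Or.inr (ih2.mpr ⟨mono_old h2 hYX b, b⟩)]
      · have e : reduct X (PForm.or A B) = PForm.bot := by
          simp only [reduct, if_neg hs]
        rw [e]
        simp only [sat]
        exact ⟨False.elim, fun h => hs h.1⟩
  | @neg A h ih =>
      by_cases hx : sat X A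
      · have hs : ¬ sat X (PForm.imp A PForm.bot) := fun hh => hh hx
        have e : reduct X (PForm.imp A PForm.bot) = PForm.bot := by
          simp only [reduct, if_neg hs]
        rw [e]
        simp only [sat, oldReduct, if_pos hx]
        exact ⟨False.elim, fun hh => (hh.1 hx).elim⟩
      · have hs : sat X (PForm.imp A PForm.bot) := fun hh => (hx hh).elim
        have e : reduct X (PForm.imp A PForm.bot)
            = PForm.imp (reduct X A) (reduct X PForm.bot) := by
          simp only [reduct, if_pos hs]
        rw [e]
        simp only [sat, oldReduct, if_neg hx, top]
        constructor
        · intro _; exact ⟨hs, fun h => h⟩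
        · intro _ ha
          exact hx (ih.mp ha).1

/-- Corollary 1: for a program with nested expressions and Y ⊆ X,
Y ⊨ Π^X iff X ⊨ Π and Y ⊨ Π^{X̲}. -/
theorem stmt19 (Prog : Set (PForm α))
    (hProg : ∀ R ∈ Prog, ∃ G F : PForm α, Nested G ∧ Nested F ∧ R = PForm.imp G F)
    (X Y : Set α) (hYX : Y ⊆ X) :
    satTh Y (reductTh X Prog) ↔
      (satTh X Prog ∧ satTh Y (oldReductRule X '' Prog)) := by
  have main : ∀ R ∈ Prog, PForm.sat Y (PForm.reduct X R) ↔
      (PForm.sat X R ∧ PForm.sat Y (oldReductRule X R)) := by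
    intro R hR
    obtain ⟨G, F, hG, hF, rfl⟩ := hProg R hR
    by_cases hs : PForm.sat X (PForm.imp G F)
    · have e : PForm.reduct X (PForm.imp G F)
          = PForm.imp (PForm.reduct X G) (PForm.reduct X F) := by
        simp only [PForm.reduct, if_pos hs]
      have e2 : oldReductRule X (PForm.imp G F)
          = PForm.imp (oldReduct X G) (oldReduct X F) := rfl
      rw [e, e2]
      simp only [PForm.sat]
      constructor
      · intro h
        refine ⟨hs, fun hog => ?_⟩
        have hg : PForm.sat X G := mono_old hG hYX hog
        exact ((key hF hYX).mp (h ((key hG hYX).mpr ⟨hg, hog⟩))).2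
      · rintro ⟨_, h⟩ hrg
        obtain ⟨hg, hog⟩ := (key hG hYX).mp hrg
        exact (key hF hYX).mpr ⟨hs hg, h hog⟩
    · have e : PForm.reduct X (PForm.imp G F) = PForm.bot := by
        simp only [PForm.reduct, if_neg hs]
      rw [e]
      simp only [PForm.sat]
      exact ⟨False.elim, fun h => hs h.1⟩
  constructor
  · intro h
    constructor
    · intro R hR
      exact ((main R hR).mp (h _ ⟨R, hR, rfl⟩)).1
    · rintro _ ⟨R, hR, rfl⟩
      exact ((main R hR).mp (h _ ⟨R, hR, rfl⟩)).2
  · rintro ⟨h1, h2⟩ _ ⟨R, hR, rfl⟩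
    exact (main R hR).mpr ⟨h1 R hR, h2 _ ⟨R, hR, rfl⟩⟩
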